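/- arXiv:1911.00117 — 3 statements merged into one kernel-verified Lean document; each statement's English description precedes it below -/
import Mathlib

section
/- Let t ∈ ℝ and ℓ := −1/2 + i·t. For every g ∈ SL(2,ℝ), every differentiable branch φ of the circle action of g, and all continuous 2π-periodic f, v : ℝ → ℂ, one has (1/2π)·∫₀^{2π} conj(σ_K(θ,g)^{−ℓ}·f(φ(θ)))·σ_K(θ,g)^{−ℓ}·v(φ(θ)) dθ = (1/2π)·∫₀^{2π} conj(f(θ))·v(θ) dθ. That is, for ℓ on the line −1/2 + iℝ (the principal series) the circle realisation of T_ℓ is unitary with respect to the inner product ⟨f|v⟩ = (1/2π)∫₀^{2π} conj(f)·v dθ. -/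
open Real

noncomputable section

abbrev SL2R := Matrix.SpecialLinearGroup (Fin 2) ℝ

/-- `u(θ,g) = a·cos(θ/2) + c·sin(θ/2)` for `g = [[a,b],[c,d]]`. -/
def uFun (g : SL2R) (θ : ℝ) : ℝ :=
  (g : Matrix (Fin 2) (Fin 2) ℝ) 0 0 * Real.cos (θ / 2) +
    (g : Matrix (Fin 2) (Fin 2) ℝ) 1 0 * Real.sin (θ / 2)

/-- `w(θ,g) = b·cos(θ/2) + d·sin(θ/2)` for `g = [[a,b],[c,d]]`. -/
def wFun (g : SL2R) (θ : ℝ) : ℝ :=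
  (g : Matrix (Fin 2) (Fin 2) ℝ) 0 1 * Real.cos (θ / 2) +
    (g : Matrix (Fin 2) (Fin 2) ℝ) 1 1 * Real.sin (θ / 2)

/-- The multiplier `σ_K(θ,g) = 1/(u² + w²)`. -/
def sigmaK (g : SL2R) (θ : ℝ) : ℝ := 1 / (uFun g θ ^ 2 + wFun g θ ^ 2)

/-- `φ : ℝ → ℝ` is a branch of the circle action of `g`. -/
def IsBranch (g : SL2R) (φ : ℝ → ℝ) : Prop :=
  ∀ θ : ℝ,
    Real.cos (φ θ / 2) = uFun g θ * Real.sqrt (sigmaK g θ) ∧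
    Real.sin (φ θ / 2) = wFun g θ * Real.sqrt (sigmaK g θ)

/-- `σ_K(θ,g)^{-ℓ} := exp(-ℓ·log σ_K(θ,g))`, as a complex number. -/
def sigmaKpow (g : SL2R) (θ : ℝ) (ℓ : ℂ) : ℂ :=
  Complex.exp (-ℓ * Real.log (sigmaK g θ))

/-! ### Auxiliary lemmas -/

lemma det_entries (g : SL2R) :
    (g : Matrix (Fin 2) (Fin 2) ℝ) 0 0 * (g : Matrix (Fin 2) (Fin 2) ℝ) 1 1 -
      (g : Matrix (Fin 2) (Fin 2) ℝ) 0 1 * (g : Matrix (Fin 2) (Fin 2) ℝ) 1 0 = 1 := by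
  have h := g.prop
  rwa [Matrix.det_fin_two] at h

lemma q_pos (g : SL2R) (θ : ℝ) : 0 < uFun g θ ^ 2 + wFun g θ ^ 2 := by
  by_contra h
  push_neg at h
  have hu : uFun g θ = 0 := by nlinarith [sq_nonneg (uFun g θ), sq_nonneg (wFun g θ)]
  have hw : wFun g θ = 0 := by nlinarith [sq_nonneg (uFun g θ), sq_nonneg (wFun g θ)]
  have hdet := det_entries g
  rw [uFun] at hu
  rw [wFun] at hw
  have hc : Real.cos (θ / 2) = 0 := by
    linear_combination (g : Matrix (Fin 2) (Fin 2) ℝ) 1 1 * hu -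
      (g : Matrix (Fin 2) (Fin 2) ℝ) 1 0 * hw - Real.cos (θ / 2) * hdet
  have hs : Real.sin (θ / 2) = 0 := by
    linear_combination (g : Matrix (Fin 2) (Fin 2) ℝ) 0 0 * hw -
      (g : Matrix (Fin 2) (Fin 2) ℝ) 0 1 * hu - Real.sin (θ / 2) * hdet
  have := Real.sin_sq_add_cos_sq (θ / 2)
  rw [hc, hs] at this
  norm_num at this

lemma sigmaK_pos (g : SL2R) (θ : ℝ) : 0 < sigmaK g θ :=
  one_div_pos.mpr (q_pos g θ)

lemma uFun_cont (g : SL2R) : Continuous (uFun g) := by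
  unfold uFun; fun_prop

lemma wFun_cont (g : SL2R) : Continuous (wFun g) := by
  unfold wFun; fun_prop

lemma sigmaK_cont (g : SL2R) : Continuous (sigmaK g) := by
  unfold sigmaK
  exact continuous_const.div (((uFun_cont g).pow 2).add ((wFun_cont g).pow 2))
    (fun θ => (q_pos g θ).ne')

lemma uFun_hasDeriv (g : SL2R) (θ : ℝ) :
    HasDerivAt (uFun g)
      ((g : Matrix (Fin 2) (Fin 2) ℝ) 0 0 * (-Real.sin (θ / 2) * (1 / 2)) +
       (g : Matrix (Fin 2) (Fin 2) ℝ) 1 0 * (Real.cos (θ / 2) * (1 / 2))) θ := by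
  have h1 : HasDerivAt (fun x : ℝ => x / 2) (1 / 2) θ := by
    simpa using (hasDerivAt_id θ).div_const 2
  have hc : HasDerivAt (fun x : ℝ => Real.cos (x / 2)) (-Real.sin (θ / 2) * (1 / 2)) θ :=
    by have := (Real.hasDerivAt_cos (θ / 2)).comp θ h1; exact this
  have hs : HasDerivAt (fun x : ℝ => Real.sin (x / 2)) (Real.cos (θ / 2) * (1 / 2)) θ :=
    by have := (Real.hasDerivAt_sin (θ / 2)).comp θ h1; exact this
  exact (hc.const_mul _).add (hs.const_mul _)

lemma wFun_hasDeriv (g : SL2R) (θ : ℝ) :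
    HasDerivAt (wFun g)
      ((g : Matrix (Fin 2) (Fin 2) ℝ) 0 1 * (-Real.sin (θ / 2) * (1 / 2)) +
       (g : Matrix (Fin 2) (Fin 2) ℝ) 1 1 * (Real.cos (θ / 2) * (1 / 2))) θ := by
  have h1 : HasDerivAt (fun x : ℝ => x / 2) (1 / 2) θ := by
    simpa using (hasDerivAt_id θ).div_const 2
  have hc : HasDerivAt (fun x : ℝ => Real.cos (x / 2)) (-Real.sin (θ / 2) * (1 / 2)) θ :=
    by have := (Real.hasDerivAt_cos (θ / 2)).comp θ h1; exact this
  have hs : HasDerivAt (fun x : ℝ => Real.sin (x / 2)) (Real.cos (θ / 2) * (1 / 2)) θ :=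
    by have := (Real.hasDerivAt_sin (θ / 2)).comp θ h1; exact this
  exact (hc.const_mul _).add (hs.const_mul _)

lemma cross_eq (g : SL2R) (θ : ℝ) :
    uFun g θ *
        ((g : Matrix (Fin 2) (Fin 2) ℝ) 0 1 * (-Real.sin (θ / 2) * (1 / 2)) +
          (g : Matrix (Fin 2) (Fin 2) ℝ) 1 1 * (Real.cos (θ / 2) * (1 / 2))) -
      wFun g θ *
        ((g : Matrix (Fin 2) (Fin 2) ℝ) 0 0 * (-Real.sin (θ / 2) * (1 / 2)) +
          (g : Matrix (Fin 2) (Fin 2) ℝ) 1 0 * (Real.cos (θ / 2) * (1 / 2))) = 1 / 2 := by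
  have hdet := det_entries g
  have hpyth := Real.sin_sq_add_cos_sq (θ / 2)
  rw [uFun, wFun]
  linear_combination ((Real.cos (θ / 2)) ^ 2 + (Real.sin (θ / 2)) ^ 2) / 2 * hdet +
    (1 / 2) * hpyth

lemma sqrt_sigmaK_eq (g : SL2R) (θ : ℝ) :
    Real.sqrt (sigmaK g θ) = (Real.sqrt (uFun g θ ^ 2 + wFun g θ ^ 2))⁻¹ := by
  rw [sigmaK, one_div, Real.sqrt_inv]

lemma phi_hasDeriv (g : SL2R) (φ : ℝ → ℝ) (hφdiff : Differentiable ℝ φ)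
    (hφ : IsBranch g φ) (θ : ℝ) : HasDerivAt φ (sigmaK g θ) θ := by
  have hD : HasDerivAt φ (deriv φ θ) θ := (hφdiff θ).hasDerivAt
  set D := deriv φ θ with hDdef
  have hqpos : 0 < uFun g θ ^ 2 + wFun g θ ^ 2 := q_pos g θ
  have hu := uFun_hasDeriv g θ
  have hw := wFun_hasDeriv g θ
  have hqd : HasDerivAt (fun x => uFun g x ^ 2 + wFun g x ^ 2) _ θ := (hu.pow 2).add (hw.pow 2)
  have hS : HasDerivAt (fun x => Real.sqrt (uFun g x ^ 2 + wFun g x ^ 2)) _ θ :=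
    (Real.hasDerivAt_sqrt hqpos.ne').comp θ hqd
  have hSpos : 0 < Real.sqrt (uFun g θ ^ 2 + wFun g θ ^ 2) := Real.sqrt_pos.mpr hqpos
  have hSinv := hS.inv hSpos.ne'
  have hU := hu.mul hSinv
  have hW := hw.mul hSinv
  have hcosφ : HasDerivAt (fun x => Real.cos (φ x / 2)) (-Real.sin (φ θ / 2) * (D / 2)) θ :=
    by have := (Real.hasDerivAt_cos (φ θ / 2)).comp θ (hD.div_const 2); exact this
  have hsinφ : HasDerivAt (fun x => Real.sin (φ x / 2)) (Real.cos (φ θ / 2) * (D / 2)) θ :=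
    by have := (Real.hasDerivAt_sin (φ θ / 2)).comp θ (hD.div_const 2); exact this
  have hfun1 : (fun x => Real.cos (φ x / 2)) =
      fun x => uFun g x * (Real.sqrt (uFun g x ^ 2 + wFun g x ^ 2))⁻¹ := by
    funext x; rw [(hφ x).1, sqrt_sigmaK_eq]
  have hfun2 : (fun x => Real.sin (φ x / 2)) =
      fun x => wFun g x * (Real.sqrt (uFun g x ^ 2 + wFun g x ^ 2))⁻¹ := by
    funext x; rw [(hφ x).2, sqrt_sigmaK_eq]
  rw [hfun1] at hcosφ
  rw [hfun2] at hsinφ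
  have e1 := hcosφ.unique hU
  have e2 := hsinφ.unique hW
  have hC : Real.cos (φ θ / 2) =
      uFun g θ * (Real.sqrt (uFun g θ ^ 2 + wFun g θ ^ 2))⁻¹ := by
    rw [(hφ θ).1, sqrt_sigmaK_eq]
  have hSφ : Real.sin (φ θ / 2) =
      wFun g θ * (Real.sqrt (uFun g θ ^ 2 + wFun g θ ^ 2))⁻¹ := by
    rw [(hφ θ).2, sqrt_sigmaK_eq]
  rw [hSφ] at e1
  rw [hC] at e2
  have hcross := cross_eq g θ
  set s := Real.sqrt (uFun g θ ^ 2 + wFun g θ ^ 2) with hsdef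
  have hs2 : s ^ 2 = uFun g θ ^ 2 + wFun g θ ^ 2 := Real.sq_sqrt hqpos.le
  have comb : (uFun g θ ^ 2 + wFun g θ ^ 2) * s⁻¹ * (D / 2) = (1 / 2) * s⁻¹ := by
    linear_combination (-(wFun g θ)) * e1 + uFun g θ * e2 + s⁻¹ * hcross
  have hDval : D = sigmaK g θ := by
    rw [sigmaK]
    have h1 : (uFun g θ ^ 2 + wFun g θ ^ 2) * (D / 2) = 1 / 2 :=
      mul_right_cancel₀ (inv_ne_zero hSpos.ne') (by linear_combination comb)
    rw [eq_div_iff hqpos.ne']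
    linear_combination 2 * h1
  exact hDval ▸ hD

lemma phi_strictMono (g : SL2R) (φ : ℝ → ℝ) (hφdiff : Differentiable ℝ φ)
    (hφ : IsBranch g φ) : StrictMono φ :=
  strictMono_of_deriv_pos fun θ => by
    rw [(phi_hasDeriv g φ hφdiff hφ θ).deriv]; exact sigmaK_pos g θ

lemma phi_two_pi (g : SL2R) (φ : ℝ → ℝ) (hφdiff : Differentiable ℝ φ)
    (hφ : IsBranch g φ) : φ (2 * π) = φ 0 + 2 * π := by
  have h2 : (2 * π) / 2 = π := by ring
  have h0 : (0 : ℝ) / 2 = 0 := by norm_num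
  have hu2 : uFun g (2 * π) = -uFun g 0 := by
    rw [uFun, uFun, h2, h0, Real.cos_pi, Real.sin_pi, Real.cos_zero, Real.sin_zero]; ring
  have hw2 : wFun g (2 * π) = -wFun g 0 := by
    rw [wFun, wFun, h2, h0, Real.cos_pi, Real.sin_pi, Real.cos_zero, Real.sin_zero]; ring
  have hσ2 : sigmaK g (2 * π) = sigmaK g 0 := by
    rw [sigmaK, sigmaK, hu2, hw2]; ring_nf
  have hcos : Real.cos (φ (2 * π) / 2) = -Real.cos (φ 0 / 2) := by
    rw [(hφ _).1, (hφ _).1, hu2, hσ2]; ring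
  have hsin : Real.sin (φ (2 * π) / 2) = -Real.sin (φ 0 / 2) := by
    rw [(hφ _).2, (hφ _).2, hw2, hσ2]; ring
  -- derive φ(2π)/2 = φ(0)/2 + π + 2πn
  have hexp : Complex.exp ((φ (2 * π) / 2 : ℝ) * Complex.I) =
      Complex.exp (((φ 0 / 2 + π : ℝ)) * Complex.I) := by
    rw [Complex.exp_mul_I, Complex.exp_mul_I, ← Complex.ofReal_cos, ← Complex.ofReal_cos,
      ← Complex.ofReal_sin, ← Complex.ofReal_sin, hcos, hsin, Real.cos_add, Real.sin_add,
      Real.cos_pi, Real.sin_pi]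
    push_cast
    ring
  obtain ⟨n, hn⟩ := Complex.exp_eq_exp_iff_exists_int.mp hexp
  have hre : φ (2 * π) / 2 = φ 0 / 2 + π + n * (2 * π) := by
    have him := congrArg Complex.im hn
    simpa using him
  have hkey : φ (2 * π) = φ 0 + 2 * π + n * (4 * π) := by linarith
  have hmono := phi_strictMono g φ hφdiff hφ
  have hπ : (0 : ℝ) < π := Real.pi_pos
  -- n ≥ 0
  have hpos : φ 0 < φ (2 * π) := hmono (by linarith)
  have hn0 : 0 ≤ n := by
    by_contra hneg
    push_neg at hneg
    have hle : n ≤ -1 := by omega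
    have : (n : ℝ) ≤ -1 := by exact_mod_cast hle
    nlinarith
  -- n ≤ 0
  have hn1 : n ≤ 0 := by
    by_contra hbig
    push_neg at hbig
    have hnr : (1 : ℝ) ≤ (n : ℝ) := by exact_mod_cast hbig
    have hmem : φ 0 + 4 * π ∈ Set.Icc (φ 0) (φ (2 * π)) := by
      constructor <;> nlinarith
    obtain ⟨θs, hθs, hval⟩ := intermediate_value_Icc (by positivity : (0 : ℝ) ≤ 2 * π)
      hφdiff.continuous.continuousOn hmem
    have hθ0 : θs ≠ 0 := by
      rintro rfl
      linarith [hval]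
    have hθ2 : θs ≠ 2 * π := by
      rintro rfl
      rw [hkey] at hval
      have : (n : ℝ) * (4 * π) = 2 * π := by linarith
      have h4 : (4 : ℝ) * π ≤ (n : ℝ) * (4 * π) := by nlinarith
      linarith
    have hθlt : 0 < θs ∧ θs < 2 * π :=
      ⟨lt_of_le_of_ne hθs.1 (Ne.symm hθ0), lt_of_le_of_ne hθs.2 hθ2⟩
    have hsinpos : 0 < Real.sin (θs / 2) :=
      Real.sin_pos_of_pos_of_lt_pi (by linarith [hθlt.1]) (by linarith [hθlt.2])
    -- branch equations at θs and 0 with φ θs = φ 0 + 4π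
    have hcs : Real.cos (φ θs / 2) = Real.cos (φ 0 / 2) := by
      rw [hval]
      have : (φ 0 + 4 * π) / 2 = φ 0 / 2 + 2 * π := by ring
      rw [this, Real.cos_add_two_pi]
    have hss : Real.sin (φ θs / 2) = Real.sin (φ 0 / 2) := by
      rw [hval]
      have : (φ 0 + 4 * π) / 2 = φ 0 / 2 + 2 * π := by ring
      rw [this, Real.sin_add_two_pi]
    have ea : uFun g θs * Real.sqrt (sigmaK g θs) = uFun g 0 * Real.sqrt (sigmaK g 0) := by
      rw [← (hφ θs).1, ← (hφ 0).1, hcs]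
    have eb : wFun g θs * Real.sqrt (sigmaK g θs) = wFun g 0 * Real.sqrt (sigmaK g 0) := by
      rw [← (hφ θs).2, ← (hφ 0).2, hss]
    have hdet := det_entries g
    simp only [uFun, wFun, h0, Real.cos_zero, Real.sin_zero] at ea eb
    have hzero : Real.sin (θs / 2) * Real.sqrt (sigmaK g θs) = 0 := by
      linear_combination (g : Matrix (Fin 2) (Fin 2) ℝ) 0 0 * eb -
        (g : Matrix (Fin 2) (Fin 2) ℝ) 0 1 * ea -
        (Real.sqrt (sigmaK g θs) * Real.sin (θs / 2)) * hdet
    have hsq : 0 < Real.sqrt (sigmaK g θs) := Real.sqrt_pos.mpr (sigmaK_pos g θs)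
    nlinarith
  have : n = 0 := le_antisymm hn1 hn0
  rw [this] at hkey
  push_cast at hkey
  linarith

/-- for `ℓ = -1/2 + i t` on the principal-series line, the circle realisation
of `T_ℓ` is unitary with respect to `⟨f|v⟩ = (1/2π)∫₀^{2π} conj(f)·v dθ`. -/
theorem stmt1 (t : ℝ) (ℓ : ℂ) (hℓ : ℓ = -(1 / 2) + Complex.I * t)
    (g : SL2R) (φ : ℝ → ℝ) (hφdiff : Differentiable ℝ φ) (hφ : IsBranch g φ)
    (f v : ℝ → ℂ) (hf : Continuous f) (hfper : Function.Periodic f (2 * π))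
    (hv : Continuous v) (hvper : Function.Periodic v (2 * π)) :
    (1 / (2 * π) : ℂ) *
        ∫ θ in (0 : ℝ)..(2 * π),
          (starRingEnd ℂ) (sigmaKpow g θ ℓ * f (φ θ)) * (sigmaKpow g θ ℓ * v (φ θ)) =
      (1 / (2 * π) : ℂ) * ∫ θ in (0 : ℝ)..(2 * π), (starRingEnd ℂ) (f θ) * v θ := by
  subst hℓ
  set h : ℝ → ℂ := fun x => (starRingEnd ℂ) (f x) * v x with hhdef
  have hhcont : Continuous h := (Complex.continuous_conj.comp hf).mul hv
  have hhper : Function.Periodic h (2 * π) := fun x => by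
    simp only [hhdef, hfper x, hvper x]
  have habs : ∀ θ : ℝ, (starRingEnd ℂ) (sigmaKpow g θ (-(1 / 2) + Complex.I * t)) *
      sigmaKpow g θ (-(1 / 2) + Complex.I * t) = (sigmaK g θ : ℂ) := by
    intro θ
    rw [sigmaKpow, ← Complex.exp_conj, ← Complex.exp_add]
    have harg : (starRingEnd ℂ) (-(-(1 / 2) + Complex.I * t) * (Real.log (sigmaK g θ) : ℝ)) +
        -(-(1 / 2) + Complex.I * t) * (Real.log (sigmaK g θ) : ℝ) =
        ((Real.log (sigmaK g θ) : ℝ) : ℂ) := by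
      simp only [map_mul, map_neg, map_add, Complex.conj_ofReal, Complex.conj_I, map_div₀,
        map_one, map_ofNat]
      ring
    rw [harg, ← Complex.ofReal_exp, Real.exp_log (sigmaK_pos g θ)]
  have hpt : ∀ θ : ℝ, (starRingEnd ℂ) (sigmaKpow g θ (-(1 / 2) + Complex.I * t) * f (φ θ)) *
      (sigmaKpow g θ (-(1 / 2) + Complex.I * t) * v (φ θ)) = sigmaK g θ • (h ∘ φ) θ := by
    intro θ
    rw [Complex.real_smul]
    simp only [map_mul, Function.comp_apply, hhdef]
    rw [← habs θ]
    ring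
  have hint1 : (∫ θ in (0 : ℝ)..(2 * π),
      (starRingEnd ℂ) (sigmaKpow g θ (-(1 / 2) + Complex.I * t) * f (φ θ)) *
        (sigmaKpow g θ (-(1 / 2) + Complex.I * t) * v (φ θ))) =
      ∫ θ in (0 : ℝ)..(2 * π), sigmaK g θ • (h ∘ φ) θ :=
    intervalIntegral.integral_congr fun x _ => hpt x
  have hint2 : (∫ θ in (0 : ℝ)..(2 * π), sigmaK g θ • (h ∘ φ) θ) =
      ∫ x in (φ 0)..(φ (2 * π)), h x :=
    intervalIntegral.integral_comp_smul_deriv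
      (fun x _ => phi_hasDeriv g φ hφdiff hφ x) (sigmaK_cont g).continuousOn hhcont
  have hint3 : (∫ x in (φ 0)..(φ (2 * π)), h x) = ∫ x in (0 : ℝ)..(2 * π), h x := by
    rw [phi_two_pi g φ hφdiff hφ]
    have := hhper.intervalIntegral_add_eq (φ 0) 0
    simpa using this
  rw [hint1, hint2, hint3]

end
end

section
/- Let g ∈ SL(2,ℝ) and let φ : ℝ → ℝ be a differentiable branch of the circle action of g. Then for every θ ∈ ℝ, φ'(θ) = σ_K(θ,g); that is, the Jacobian of the circle action θ ↦ θ·g equals the multiplier σ_K(θ,g) = 1/((a·cos(θ/2)+c·sin(θ/2))² + (b·cos(θ/2)+d·sin(θ/2))²). -/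
open Real

noncomputable section

/-- every differentiable branch `φ` of the circle action of `g` satisfies
`φ'(θ) = σ_K(θ,g)`: the Jacobian of the circle action equals the multiplier. -/
theorem stmt3 (g : SL2R) (φ : ℝ → ℝ) (hφdiff : Differentiable ℝ φ) (hφ : IsBranch g φ) :
    ∀ θ : ℝ, deriv φ θ = sigmaK g θ := by
  intro θ
  set a := (g : Matrix (Fin 2) (Fin 2) ℝ) 0 0 with ha
  set b := (g : Matrix (Fin 2) (Fin 2) ℝ) 0 1 with hb
  set c := (g : Matrix (Fin 2) (Fin 2) ℝ) 1 0 with hc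
  set d := (g : Matrix (Fin 2) (Fin 2) ℝ) 1 1 with hd
  have hdet : a * d - b * c = 1 := by
    have := g.prop
    rwa [Matrix.det_fin_two] at this
  have hpyth := Real.sin_sq_add_cos_sq (θ / 2)
  -- positivity of u² + w²
  have hq0 : uFun g θ ^ 2 + wFun g θ ^ 2 ≠ 0 := by
    intro h
    have hu0 : uFun g θ = 0 := by nlinarith [sq_nonneg (uFun g θ), sq_nonneg (wFun g θ)]
    have hw0 : wFun g θ = 0 := by nlinarith [sq_nonneg (uFun g θ), sq_nonneg (wFun g θ)]
    have h1 := (hφ θ).1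
    have h2 := (hφ θ).2
    rw [hu0, zero_mul] at h1
    rw [hw0, zero_mul] at h2
    have := Real.sin_sq_add_cos_sq (φ θ / 2)
    rw [h1, h2] at this
    norm_num at this
  have hqpos : 0 < uFun g θ ^ 2 + wFun g θ ^ 2 := by
    rcases lt_or_eq_of_le (by positivity : (0:ℝ) ≤ uFun g θ ^ 2 + wFun g θ ^ 2) with h | h
    · exact h
    · exact absurd h.symm hq0
  have hσpos : 0 < sigmaK g θ := by
    unfold sigmaK; positivity
  -- derivatives of the basic trig functions
  have hhalf : HasDerivAt (fun t : ℝ => t / 2) (1 / 2) θ := (hasDerivAt_id θ).div_const 2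
  have hcos : HasDerivAt (fun t : ℝ => Real.cos (t / 2)) (-Real.sin (θ / 2) * (1 / 2)) θ :=
    by have := (Real.hasDerivAt_cos (θ / 2)).comp θ hhalf; exact this
  have hsin : HasDerivAt (fun t : ℝ => Real.sin (t / 2)) (Real.cos (θ / 2) * (1 / 2)) θ :=
    by have := (Real.hasDerivAt_sin (θ / 2)).comp θ hhalf; exact this
  set u' : ℝ := a * (-Real.sin (θ / 2) * (1 / 2)) + c * (Real.cos (θ / 2) * (1 / 2)) with hu'
  set w' : ℝ := b * (-Real.sin (θ / 2) * (1 / 2)) + d * (Real.cos (θ / 2) * (1 / 2)) with hw'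
  have hu : HasDerivAt (uFun g) u' θ := by
    unfold uFun
    exact (hcos.const_mul a).add (hsin.const_mul c)
  have hw : HasDerivAt (wFun g) w' θ := by
    unfold wFun
    exact (hcos.const_mul b).add (hsin.const_mul d)
  -- Wronskian
  have hW : uFun g θ * w' - wFun g θ * u' = 1 / 2 := by
    unfold uFun wFun
    rw [hu', hw']
    nlinarith [hdet, hpyth]
  -- derivative of q = u² + w²
  have hqd : HasDerivAt (fun t => uFun g t ^ 2 + wFun g t ^ 2)
      (2 * uFun g θ * u' + 2 * wFun g θ * w') θ := by
    have := ((hu.mul hu).add (hw.mul hw))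
    have h2 : HasDerivAt (fun t => uFun g t * uFun g t + wFun g t * wFun g t)
        (u' * uFun g θ + uFun g θ * u' + (w' * wFun g θ + wFun g θ * w')) θ := this
    have heq : (fun t => uFun g t ^ 2 + wFun g t ^ 2)
        = fun t => uFun g t * uFun g t + wFun g t * wFun g t := by
      funext t; ring
    rw [heq]
    convert h2 using 1
    ring
  -- derivative of σ
  have hσd : HasDerivAt (fun t => sigmaK g t)
      (-(2 * uFun g θ * u' + 2 * wFun g θ * w') / (uFun g θ ^ 2 + wFun g θ ^ 2) ^ 2) θ := by
    have : HasDerivAt (fun t => (uFun g t ^ 2 + wFun g t ^ 2)⁻¹)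
        (-(2 * uFun g θ * u' + 2 * wFun g θ * w') / (uFun g θ ^ 2 + wFun g θ ^ 2) ^ 2) θ :=
      hqd.inv hq0
    have heq : (fun t => sigmaK g t) = fun t => (uFun g t ^ 2 + wFun g t ^ 2)⁻¹ := by
      funext t; simp [sigmaK, one_div]
    rw [heq]
    exact this
  set r' : ℝ := -(2 * uFun g θ * u' + 2 * wFun g θ * w') / (uFun g θ ^ 2 + wFun g θ ^ 2) ^ 2
      / (2 * Real.sqrt (sigmaK g θ)) with hr'
  have hr : HasDerivAt (fun t => Real.sqrt (sigmaK g t)) r' θ := hσd.sqrt (ne_of_gt hσpos)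
  set R : ℝ := Real.sqrt (sigmaK g θ) with hR
  -- derivative of cos(φ/2) and sin(φ/2) via the branch equations
  have hC1 : HasDerivAt (fun t => Real.cos (φ t / 2)) (u' * R + uFun g θ * r') θ := by
    have h := hu.mul hr
    have heq : (fun t => Real.cos (φ t / 2)) = fun t => uFun g t * Real.sqrt (sigmaK g t) := by
      funext t; exact (hφ t).1
    rw [heq]; exact h
  have hS1 : HasDerivAt (fun t => Real.sin (φ t / 2)) (w' * R + wFun g θ * r') θ := by
    have h := hw.mul hr
    have heq : (fun t => Real.sin (φ t / 2)) = fun t => wFun g t * Real.sqrt (sigmaK g t) := by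
      funext t; exact (hφ t).2
    rw [heq]; exact h
  -- derivative via the chain rule
  set D : ℝ := deriv φ θ with hD
  have hφd : HasDerivAt φ D θ := (hφdiff θ).hasDerivAt
  have hφ2 : HasDerivAt (fun t => φ t / 2) (D / 2) θ := hφd.div_const 2
  have hC2 : HasDerivAt (fun t => Real.cos (φ t / 2)) (-Real.sin (φ θ / 2) * (D / 2)) θ :=
    by have := (Real.hasDerivAt_cos (φ θ / 2)).comp θ hφ2; exact this
  have hS2 : HasDerivAt (fun t => Real.sin (φ t / 2)) (Real.cos (φ θ / 2) * (D / 2)) θ :=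
    by have := (Real.hasDerivAt_sin (φ θ / 2)).comp θ hφ2; exact this
  have e1 : u' * R + uFun g θ * r' = -(wFun g θ * R) * (D / 2) := by
    have := hC1.unique hC2
    rw [this, (hφ θ).2]
  have e2 : w' * R + wFun g θ * r' = (uFun g θ * R) * (D / 2) := by
    have := hS1.unique hS2
    rw [this, (hφ θ).1]
  have hRsq : R ^ 2 = sigmaK g θ := Real.sq_sqrt hσpos.le
  have hσq : sigmaK g θ * (uFun g θ ^ 2 + wFun g θ ^ 2) = 1 := by
    unfold sigmaK
    field_simp
  linear_combination 2 * wFun g θ * R * e1 - 2 * uFun g θ * R * e2 + 2 * R ^ 2 * hW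
    + (1 - (uFun g θ ^ 2 + wFun g θ ^ 2) * D) * hRsq - D * hσq

end
end

section
/- Let ℓ ∈ ℂ and n ∈ ℤ. A differentiable function v : ℝ → ℂ satisfies the eigenvalue equation i·( −ℓ·x·v(x) + ((1+x²)/2)·v'(x) ) = n·v(x) for all x ∈ ℝ if and only if there exists c ∈ ℂ such that v(x) = c·(x+i)^{ℓ+n}·(x−i)^{ℓ−n} for all x ∈ ℝ, where z^{w} denotes the principal branch of the complex power (well defined here since x±i is never a nonpositive real number). In other words, every eigenfunction of the operator J₀ = i·K of the line realisation, K v = −ℓ·x·v + ((1+x²)/2)·v', with eigenvalue n is proportional to (x+i)^{ℓ+n}(x−i)^{ℓ−n}. -/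
open Complex

@[irreducible] noncomputable def Fa (a b : ℂ) (x : ℝ) : ℂ :=
  ((x : ℂ) + I) ^ a * ((x : ℂ) - I) ^ b

noncomputable def Ga (a b : ℂ) (x : ℝ) : ℂ :=
  a / ((x : ℂ) + I) + b / ((x : ℂ) - I)

lemma hp (x : ℝ) : (x : ℂ) + I ∈ Complex.slitPlane := by
  rw [Complex.mem_slitPlane_iff]; right; simp

lemma hm (x : ℝ) : (x : ℂ) - I ∈ Complex.slitPlane := by
  rw [Complex.mem_slitPlane_iff]; right; simp

lemma hpne (x : ℝ) : (x : ℂ) + I ≠ 0 := Complex.slitPlane_ne_zero (hp x)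
lemma hmne (x : ℝ) : (x : ℂ) - I ≠ 0 := Complex.slitPlane_ne_zero (hm x)

lemma Fne (a b : ℂ) (x : ℝ) : Fa a b x ≠ 0 := by
  unfold Fa
  exact mul_ne_zero (by simp [Complex.cpow_eq_zero_iff, hpne x])
    (by simp [Complex.cpow_eq_zero_iff, hmne x])

lemma Fa_def (a b : ℂ) (x : ℝ) : Fa a b x = ((x : ℂ) + I) ^ a * ((x : ℂ) - I) ^ b := by
  unfold Fa; rfl

lemma hasDerivAt_Fa (a b : ℂ) (x : ℝ) :
    HasDerivAt (Fa a b) (Ga a b x * Fa a b x) x := by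
  have hFa : Fa a b = fun y : ℝ => ((y : ℂ) + I) ^ a * ((y : ℂ) - I) ^ b :=
    funext fun y => Fa_def a b y
  rw [hFa]
  have h0 : HasDerivAt (fun x : ℝ => (x : ℂ)) 1 x := by
    exact Complex.ofRealCLM.hasDerivAt (x := x)
  have h1 : HasDerivAt (fun x : ℝ => (x : ℂ) + I) 1 x := h0.add_const I
  have h2 : HasDerivAt (fun x : ℝ => (x : ℂ) - I) 1 x := h0.sub_const I
  have hc1 : HasDerivAt (fun y : ℝ => ((y:ℂ) + I) ^ a) (a * ((x:ℂ) + I) ^ (a - 1) * 1) x := by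
    exact (Complex.hasStrictDerivAt_cpow_const (c := a) (hp x)).hasDerivAt.comp x h1
  have hc2 : HasDerivAt (fun y : ℝ => ((y:ℂ) - I) ^ b) (b * ((x:ℂ) - I) ^ (b - 1) * 1) x := by
    exact (Complex.hasStrictDerivAt_cpow_const (c := b) (hm x)).hasDerivAt.comp x h2
  have := hc1.mul hc2
  convert this using 1
  · rfl
  · rfl
  have e1 : ((x : ℂ) + I) ^ (a - 1) = ((x : ℂ) + I) ^ a / ((x : ℂ) + I) := by
    rw [Complex.cpow_sub _ _ (hpne x), Complex.cpow_one]
  have e2 : ((x : ℂ) - I) ^ (b - 1) = ((x : ℂ) - I) ^ b / ((x : ℂ) - I) := by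
    rw [Complex.cpow_sub _ _ (hmne x), Complex.cpow_one]
  rw [e1, e2]
  unfold Ga
  field_simp


lemma myderiv_eq (ℓ : ℂ) (n : ℤ) (v : ℝ → ℂ)
    (hEq : ∀ x : ℝ,
        Complex.I * (-ℓ * (x : ℂ) * v x + ((1 + (x : ℂ) ^ 2) / 2) * deriv v x) =
          (n : ℂ) * v x) (x : ℝ) :
    deriv v x = Ga (ℓ + n) (ℓ - n) x * v x := by
  have h := hEq x
  have h2 : ((1 + (x:ℂ)^2)/2) * deriv v x = (ℓ * x - I * n) * v x := by
    linear_combination (-I) * h +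
      (((1 + (x:ℂ)^2)/2) * deriv v x - ℓ * x * v x) * Complex.I_sq
  unfold Ga
  have hp' := hpne x
  have hm' := hmne x
  field_simp
  linear_combination 2 * h2 - deriv v x * Complex.I_sq

/-- a differentiable `v : ℝ → ℂ` satisfies the eigenvalue equation
`i·(-ℓ·x·v(x) + ((1+x²)/2)·v'(x)) = n·v(x)` for the operator `J₀ = i·K` of the line
realisation of `T_ℓ` if and only if `v(x) = c·(x+i)^{ℓ+n}·(x-i)^{ℓ-n}` for some `c ∈ ℂ`
(principal branch of the complex powers). -/
theorem stmt15 (ℓ : ℂ) (n : ℤ) (v : ℝ → ℂ) (hv : Differentiable ℝ v) :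
    (∀ x : ℝ,
        Complex.I * (-ℓ * (x : ℂ) * v x + ((1 + (x : ℂ) ^ 2) / 2) * deriv v x) =
          (n : ℂ) * v x) ↔
    ∃ c : ℂ, ∀ x : ℝ,
        v x = c * ((x : ℂ) + Complex.I) ^ (ℓ + (n : ℂ)) *
          ((x : ℂ) - Complex.I) ^ (ℓ - (n : ℂ)) := by
  constructor
  · intro hEq
    have key : ∀ x : ℝ, HasDerivAt v (Ga (ℓ + n) (ℓ - n) x * v x) x := fun x => by
      rw [← myderiv_eq ℓ n v hEq x]; exact (hv x).hasDerivAt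
    have hu : ∀ x : ℝ,
        HasDerivAt (fun y => v y * Fa (-(ℓ + n)) (-(ℓ - n)) y) 0 x := by
      intro x
      have h1 := (key x).mul (hasDerivAt_Fa (-(ℓ + n)) (-(ℓ - n)) x)
      convert h1 using 1
      · rfl
      · rfl
      have hG : Ga (-(ℓ + n)) (-(ℓ - n)) x = - Ga (ℓ + n) (ℓ - n) x := by
        unfold Ga; ring
      rw [hG]; ring
    have hdiff : Differentiable ℝ (fun y => v y * Fa (-(ℓ + n)) (-(ℓ - n)) y) :=
      fun x => (hu x).differentiableAt
    have hconst := is_const_of_deriv_eq_zero hdiff (fun x => (hu x).deriv)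
    refine ⟨v 0 * Fa (-(ℓ + n)) (-(ℓ - n)) 0, fun x => ?_⟩
    have h0 := hconst x 0
    have hinv : Fa (-(ℓ + n)) (-(ℓ - n)) x * Fa (ℓ + n) (ℓ - n) x = 1 := by
      rw [Fa_def, Fa_def, Complex.cpow_neg, Complex.cpow_neg]
      have h1 : ((x : ℂ) + I) ^ (ℓ + (n : ℂ)) ≠ 0 := by
        simp [Complex.cpow_eq_zero_iff, hpne x]
      have h2 : ((x : ℂ) - I) ^ (ℓ - (n : ℂ)) ≠ 0 := by
        simp [Complex.cpow_eq_zero_iff, hmne x]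
      field_simp
    have : v x = (v x * Fa (-(ℓ + n)) (-(ℓ - n)) x) * Fa (ℓ + n) (ℓ - n) x := by
      rw [mul_assoc, hinv, mul_one]
    rw [this, h0, Fa_def (ℓ + (n:ℂ)) (ℓ - (n:ℂ)) x, ← mul_assoc]
  · rintro ⟨c, hc⟩ x
    have hveq : v = fun y => c * Fa (ℓ + n) (ℓ - n) y :=
      funext fun y => by rw [hc y]; unfold Fa; ring
    have hdv : deriv v x = c * (Ga (ℓ + n) (ℓ - n) x * Fa (ℓ + n) (ℓ - n) x) := by
      rw [hveq]; exact ((hasDerivAt_Fa (ℓ + n) (ℓ - n) x).const_mul c).deriv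
    rw [hdv, hc x]
    unfold Fa Ga
    have hp' := hpne x
    have hm' := hmne x
    field_simp
    linear_combination c * ((x:ℂ) + I) ^ (ℓ + (n:ℂ)) * ((x:ℂ) - I) ^ (ℓ - (n:ℂ)) *
      (2 * ℓ * (x:ℂ) * I - 2 * (n:ℂ) * (x:ℂ) ^ 2) * Complex.I_sq
end
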